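/- Fix ε₁ > 0. Let x ≥ y ≥ log x ≥ 2, suppose y is large enough and 1/2 + ε₁ ≤ α_G(x,y) ≤ 1 - 4/log y. Then there is a constant c₀ > 0 such that for all real t with |t| ≤ 1/log y, writing s = α_G + it, one has |H(s,G;y) / H(α_G,G;y)| ≤ exp( -(c₀ y / log y) · log( 1 + t² φ₂(α_G,G;y) / (y/log y) ) ). -/

import Mathlib

open Real Finset
open scoped Classical

/-- `r(n)`: the number of representations of `n` as a sum of two squares of integers,
where different signs and different orders of the summands are counted as different. -/
noncomputable def rG (n : ℕ) : ℕ := Set.ncard {q : ℤ × ℤ | q.1 ^ 2 + q.2 ^ 2 = (n : ℤ)}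

/-- `χ₄`, the unique primitive Dirichlet character modulo 4, as a real-valued function. -/
noncomputable def chi4 (n : ℕ) : ℝ := ((ZMod.χ₄ (n : ZMod 4) : ℤ) : ℝ)

/-- The finite set of primes `p ≤ y`. -/
noncomputable def primesUpTo (y : ℝ) : Finset ℕ := (Finset.range (⌊y⌋₊ + 1)).filter Nat.Prime

/-- `H(σ, G; y) = ∏_{p ≤ y} (1 - p^{-σ})⁻¹ (1 - χ₄(p) p^{-σ})⁻¹` for real `σ`. -/
noncomputable def HG (σ y : ℝ) : ℝ :=
  ∏ p ∈ primesUpTo y, ((1 - (p : ℝ) ^ (-σ))⁻¹ * (1 - chi4 p * (p : ℝ) ^ (-σ))⁻¹)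

/-- `φ(σ, G; y) = log H(σ, G; y)`. -/
noncomputable def phiG (σ y : ℝ) : ℝ := Real.log (HG σ y)

/-- `φ_k(σ, G; y)`, the `k`-th partial derivative of `φ(σ, G; y)` with respect to `σ`. -/
noncomputable def phiGk (k : ℕ) (σ y : ℝ) : ℝ := iteratedDeriv k (fun s => phiG s y) σ

/-- `Ψ_G(x, y) = Σ_{n ≤ x, P(n) ≤ y} r(n)`: the sum of `r(n)` over `y`-smooth `n ≤ x`. -/
noncomputable def PsiG (x y : ℝ) : ℝ :=
  ∑ n ∈ Finset.Icc 1 ⌊x⌋₊, if ∀ p ∈ n.primeFactors, (p : ℝ) ≤ y then (rG n : ℝ) else 0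

/-- `H(s, G; y)` for complex `s`. -/
noncomputable def HGc (s : ℂ) (y : ℝ) : ℂ :=
  ∏ p ∈ primesUpTo y, ((1 - (p : ℂ) ^ (-s))⁻¹ * (1 - (chi4 p : ℂ) * (p : ℂ) ^ (-s))⁻¹)


/-!
For `|t| ≤ 1 / log y` every prime `p ≤ y` has `|θ| ≤ 1` for `θ = t log p`, and with `w = p^{-α}`
`|1 - w e^{iθ}|² = (1 - w)² + 2w(1 - cos θ) ≥ (1 - w)² (1 + θ² w / (4 (1 - w)²))`.
Since `θ² w / (1 - w)²` is `t²` times the contribution of `(1 - p^{-σ})⁻¹` to `φ₂(α)`, each Euler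
factor of `H(s)` is smaller than the one of `H(α)` by a factor `exp(-t² · (its share of φ₂) / 64)`.
For `χ₄(p) = -1` the factor `(1 + p^{-s})⁻¹` alone can be larger than `(1 + p^{-α})⁻¹`, so it is
paired with `(1 - p^{-s})⁻¹` into `(1 - p^{-2s})⁻¹`. Hence `|H(s)/H(α)| ≤ exp(-t² φ₂(α) / 64)`,
and the claim follows with `c₀ = 1/64` from `Y log(1 + a / Y) ≤ a`.
-/

lemma chi4_eq_zero_or_one_or_neg_one (n : ℕ) : chi4 n = 0 ∨ chi4 n = 1 ∨ chi4 n = -1 := by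
  unfold chi4
  rcases ZMod.isQuadratic_χ₄ (n : ZMod 4) with h | h | h <;> simp [h]

lemma abs_chi4_le_one (n : ℕ) : |chi4 n| ≤ 1 := by
  rcases chi4_eq_zero_or_one_or_neg_one n with h | h | h <;> simp [h]

lemma mem_primesUpTo {p : ℕ} {y : ℝ} (h : p ∈ primesUpTo y) : p.Prime ∧ (p : ℝ) ≤ y := by
  obtain ⟨hpy, hp⟩ := Finset.mem_filter.1 h
  exact ⟨hp, (Nat.le_floor_iff' hp.ne_zero).1 (Nat.lt_succ_iff.1 (Finset.mem_range.1 hpy))⟩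

lemma hasDerivAt_rpow_neg {a : ℝ} (ha : 0 < a) (x : ℝ) :
    HasDerivAt (fun s => a ^ (-s)) (-(log a * a ^ (-x))) x := by
  simpa using (hasDerivAt_neg x).const_rpow ha

section RealEulerFactor

variable {a c σ : ℝ}

lemma one_sub_mul_rpow_neg_pos (ha : 1 < a) (hc : |c| ≤ 1) (hσ : 0 < σ) :
    0 < 1 - c * a ^ (-σ) := by
  have hw0 : 0 < a ^ (-σ) := rpow_pos_of_pos (by linarith) _
  have hw1 : a ^ (-σ) < 1 := rpow_lt_one_of_one_lt_of_neg ha (by linarith)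
  nlinarith [(abs_le.1 hc).2]

noncomputable def logEulerFactor (c a σ : ℝ) : ℝ := -log (1 - c * a ^ (-σ))

noncomputable def logEulerFactorDeriv (c a σ : ℝ) : ℝ :=
  -(c * log a * a ^ (-σ) / (1 - c * a ^ (-σ)))

noncomputable def logEulerFactorDeriv2 (c a σ : ℝ) : ℝ :=
  c * log a ^ 2 * a ^ (-σ) / (1 - c * a ^ (-σ)) ^ 2

lemma hasDerivAt_logEulerFactor (ha : 1 < a) (hc : |c| ≤ 1) (hσ : 0 < σ) :
    HasDerivAt (logEulerFactor c a) (logEulerFactorDeriv c a σ) σ := by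
  have h := (((hasDerivAt_rpow_neg (zero_lt_one.trans ha) σ).const_mul c).const_sub 1).log
    (one_sub_mul_rpow_neg_pos ha hc hσ).ne'
  exact h.neg.congr_deriv (by unfold logEulerFactorDeriv; ring)

lemma hasDerivAt_logEulerFactorDeriv (ha : 1 < a) (hc : |c| ≤ 1) (hσ : 0 < σ) :
    HasDerivAt (logEulerFactorDeriv c a) (logEulerFactorDeriv2 c a σ) σ := by
  have hu := hasDerivAt_rpow_neg (zero_lt_one.trans ha) σ
  have hpos := one_sub_mul_rpow_neg_pos ha hc hσ
  have h : HasDerivAt (fun s => -(c * log a * (a ^ (-s) / (1 - c * a ^ (-s))))) _ σ :=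
    ((hu.div ((hu.const_mul c).const_sub 1) hpos.ne').const_mul (c * log a)).neg
  refine (h.congr_deriv ?_).congr_of_eventuallyEq
    (.of_forall fun s => by unfold logEulerFactorDeriv; ring)
  unfold logEulerFactorDeriv2
  field_simp
  ring

lemma sq_mul_logEulerFactorDeriv2_one (t : ℝ) :
    t ^ 2 * logEulerFactorDeriv2 1 a σ = (t * log a) ^ 2 * a ^ (-σ) / (1 - a ^ (-σ)) ^ 2 := by
  unfold logEulerFactorDeriv2
  ring

lemma logEulerFactorDeriv2_one_add_neg_one (ha : 1 < a) (hσ : 0 < σ) :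
    logEulerFactorDeriv2 1 a σ + logEulerFactorDeriv2 (-1) a σ =
      (2 * log a) ^ 2 * (a ^ (-σ)) ^ 2 / (1 - (a ^ (-σ)) ^ 2) ^ 2 := by
  have hw0 : 0 < a ^ (-σ) := rpow_pos_of_pos (by linarith) _
  have hw1 : a ^ (-σ) < 1 := rpow_lt_one_of_one_lt_of_neg ha (by linarith)
  have h1 : 1 - a ^ (-σ) ≠ 0 := by linarith
  have h2 : 1 + a ^ (-σ) ≠ 0 := by linarith
  have h3 : 1 - (a ^ (-σ)) ^ 2 ≠ 0 := by nlinarith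
  unfold logEulerFactorDeriv2
  simp only [one_mul, neg_one_mul, sub_neg_eq_add]
  field_simp
  ring

end RealEulerFactor

lemma phiG_eq_sum (y : ℝ) {σ : ℝ} (hσ : 0 < σ) :
    phiG σ y = ∑ p ∈ primesUpTo y, (logEulerFactor 1 p σ + logEulerFactor (chi4 p) p σ) := by
  have hpos : ∀ p ∈ primesUpTo y, ∀ c : ℝ, |c| ≤ 1 → 0 < 1 - c * (p : ℝ) ^ (-σ) :=
    fun p hp c hc => one_sub_mul_rpow_neg_pos (by exact_mod_cast (mem_primesUpTo hp).1.one_lt) hc hσ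
  have h1 : ∀ p ∈ primesUpTo y, 0 < 1 - (p : ℝ) ^ (-σ) := fun p hp => by
    simpa using hpos p hp 1 (by norm_num)
  have hχ : ∀ p ∈ primesUpTo y, 0 < 1 - chi4 p * (p : ℝ) ^ (-σ) := fun p hp =>
    hpos p hp _ (abs_chi4_le_one p)
  rw [phiG, HG, log_prod fun p hp => by have := h1 p hp; have := hχ p hp; positivity]
  refine sum_congr rfl fun p hp => ?_
  rw [log_mul (inv_pos.2 (h1 p hp)).ne' (inv_pos.2 (hχ p hp)).ne', log_inv, log_inv,
    logEulerFactor, logEulerFactor, one_mul]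

lemma iteratedDeriv_two_eq_of_hasDerivAt {f f' : ℝ → ℝ} {f'' x : ℝ} {U : Set ℝ} (hU : IsOpen U)
    (hx : x ∈ U) (hf : ∀ y ∈ U, HasDerivAt f (f' y) y) (hf' : HasDerivAt f' f'' x) :
    iteratedDeriv 2 f x = f'' := by
  have h : deriv f =ᶠ[nhds x] f' :=
    Filter.eventually_of_mem (hU.mem_nhds hx) fun y hy => (hf y hy).deriv
  rw [iteratedDeriv_succ, iteratedDeriv_one, h.deriv_eq, hf'.deriv]

lemma phiGk_two_eq (y : ℝ) {α : ℝ} (hα : 0 < α) :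
    phiGk 2 α y = ∑ p ∈ primesUpTo y,
      (logEulerFactorDeriv2 1 p α + logEulerFactorDeriv2 (chi4 p) p α) := by
  have hp : ∀ p ∈ primesUpTo y, (1 : ℝ) < p := fun p hp => by
    exact_mod_cast (mem_primesUpTo hp).1.one_lt
  refine iteratedDeriv_two_eq_of_hasDerivAt isOpen_Ioi hα (fun σ hσ => ?_) ?_
    (f' := fun σ => ∑ p ∈ primesUpTo y,
      (logEulerFactorDeriv 1 p σ + logEulerFactorDeriv (chi4 p) p σ))
  · refine (HasDerivAt.fun_sum fun p hp' => ?_).congr_of_eventuallyEq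
      (Filter.eventually_of_mem (isOpen_Ioi.mem_nhds hσ) fun τ hτ => phiG_eq_sum y hτ)
    exact (hasDerivAt_logEulerFactor (hp p hp') (by norm_num) hσ).add
      (hasDerivAt_logEulerFactor (hp p hp') (abs_chi4_le_one p) hσ)
  · exact HasDerivAt.fun_sum fun p hp' =>
      (hasDerivAt_logEulerFactorDeriv (hp p hp') (by norm_num) hα).add
        (hasDerivAt_logEulerFactorDeriv (hp p hp') (abs_chi4_le_one p) hα)

lemma logEulerFactorDeriv2_one_add_chi4_nonneg {p : ℕ} (hp : p.Prime) {σ : ℝ} (hσ : 0 < σ) :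
    0 ≤ logEulerFactorDeriv2 1 p σ + logEulerFactorDeriv2 (chi4 p) p σ := by
  have hp1 : (1 : ℝ) < p := by exact_mod_cast hp.one_lt
  have h1 : 0 ≤ logEulerFactorDeriv2 1 p σ := by
    unfold logEulerFactorDeriv2
    have := rpow_pos_of_pos (zero_lt_one.trans hp1) (-σ)
    positivity
  rcases chi4_eq_zero_or_one_or_neg_one p with hc | hc | hc <;> rw [hc]
  · simpa [logEulerFactorDeriv2] using h1
  · positivity
  · rw [logEulerFactorDeriv2_one_add_neg_one hp1 hσ]
    positivity

lemma phiGk_two_nonneg (y : ℝ) {α : ℝ} (hα : 0 < α) : 0 ≤ phiGk 2 α y := by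
  rw [phiGk_two_eq y hα]
  exact sum_nonneg fun p hp => logEulerFactorDeriv2_one_add_chi4_nonneg (mem_primesUpTo hp).1 hα

lemma sq_div_eight_le_one_sub_cos {θ : ℝ} (hθ : |θ| ≤ π) : θ ^ 2 / 8 ≤ 1 - Real.cos θ := by
  have hπ : 1 / 8 ≤ 2 / π ^ 2 := by
    rw [div_le_div_iff₀ (by norm_num) (by positivity)]
    nlinarith [pi_le_four, pi_pos]
  nlinarith [cos_le_one_sub_mul_cos_sq hθ, sq_nonneg θ]

lemma exp_le_one_add_eight_mul {x : ℝ} (hx0 : 0 ≤ x) (hx : x ≤ 7 / 8) :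
    Real.exp x ≤ 1 + 8 * x := by
  refine (exp_bound_div_one_sub_of_interval hx0 (by linarith)).trans ?_
  rw [div_le_iff₀ (by linarith)]
  nlinarith

lemma one_sub_sq_mul_exp_le {w θ : ℝ} (hw0 : 0 ≤ w) (hw1 : w < 1) (hθ : |θ| ≤ 2)
    (hq : θ ^ 2 * w / (1 - w) ^ 2 ≤ 28) :
    (1 - w) ^ 2 * Real.exp (θ ^ 2 * w / (1 - w) ^ 2 / 32) ≤ 1 - 2 * w * Real.cos θ + w ^ 2 := by
  have hcos := sq_div_eight_le_one_sub_cos (hθ.trans (by linarith [pi_gt_three]))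
  have hexp := exp_le_one_add_eight_mul (x := θ ^ 2 * w / (1 - w) ^ 2 / 32) (by positivity)
    (by linarith)
  have hw : 1 - w ≠ 0 := by linarith
  calc (1 - w) ^ 2 * Real.exp (θ ^ 2 * w / (1 - w) ^ 2 / 32)
      ≤ (1 - w) ^ 2 * (1 + 8 * (θ ^ 2 * w / (1 - w) ^ 2 / 32)) := by gcongr
    _ = (1 - w) ^ 2 + 2 * w * (θ ^ 2 / 8) := by field_simp; ring
    _ ≤ 1 - 2 * w * Real.cos θ + w ^ 2 := by nlinarith

open Complex in
lemma normSq_one_sub_mul_exp (w θ : ℝ) :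
    normSq (1 - w * exp (θ * I)) = 1 - 2 * w * Real.cos θ + w ^ 2 := by
  simp only [normSq_apply, sub_re, sub_im, one_re, one_im, re_ofReal_mul, im_ofReal_mul,
    exp_ofReal_mul_I_re, exp_ofReal_mul_I_im]
  linear_combination w ^ 2 * Real.sin_sq_add_cos_sq θ

open Complex in
lemma norm_inv_one_sub_mul_exp_le {w θ : ℝ} (hw0 : 0 ≤ w) (hw1 : w < 1) (hθ : |θ| ≤ 2)
    (hq : θ ^ 2 * w / (1 - w) ^ 2 ≤ 28) :
    ‖(1 - w * exp (θ * I))⁻¹‖ ≤ (1 - w)⁻¹ * Real.exp (-(θ ^ 2 * w / (1 - w) ^ 2) / 64) := by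
  set q := θ ^ 2 * w / (1 - w) ^ 2
  have hlow : (1 - w) * Real.exp (q / 64) ≤ ‖1 - w * exp (θ * I)‖ := by
    refine (pow_le_pow_iff_left₀ (mul_pos (by linarith) (Real.exp_pos _)).le (norm_nonneg _)
      two_ne_zero).1 ?_
    have h2 : Real.exp (q / 64) ^ 2 = Real.exp (q / 32) := by
      rw [← Real.exp_nat_mul]
      ring_nf
    rw [Complex.sq_norm, normSq_one_sub_mul_exp, mul_pow, h2]
    exact one_sub_sq_mul_exp_le hw0 hw1 hθ hq
  rw [norm_inv, neg_div, Real.exp_neg, ← mul_inv]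
  exact inv_anti₀ (mul_pos (by linarith) (Real.exp_pos _)) hlow

open Complex in
lemma natCast_cpow_neg_add_mul_I {p : ℕ} (hp : 0 < p) (α t : ℝ) :
    (p : ℂ) ^ (-(α + t * I)) = ((p : ℝ) ^ (-α) : ℝ) * exp ((-(t * Real.log p) : ℝ) * I) := by
  have hp0 : (p : ℂ) ≠ 0 := Nat.cast_ne_zero.2 hp.ne'
  rw [neg_add, cpow_add _ _ hp0, ofReal_cpow (Nat.cast_nonneg p), ofReal_natCast,
    cpow_def_of_ne_zero hp0 (-(t * I)), ← natCast_log]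
  push_cast
  ring_nf

open Complex in
lemma norm_inv_one_sub_mul_exp_le_of_sq_le_half {w θ : ℝ} (hw0 : 0 ≤ w) (hw : w ^ 2 ≤ 1 / 2)
    (hθ : |θ| ≤ 1) :
    ‖(1 - w * exp (θ * I))⁻¹‖ ≤ (1 - w)⁻¹ * Real.exp (-(θ ^ 2 * w / (1 - w) ^ 2) / 64) := by
  refine norm_inv_one_sub_mul_exp_le hw0 (by nlinarith) (by linarith) ?_
  rw [div_le_iff₀ (by nlinarith)]
  nlinarith [sq_abs θ, abs_nonneg θ]

open Complex in
lemma norm_inv_one_sub_mul_exp_mul_inv_one_add_le {w θ : ℝ} (hw : w ^ 2 ≤ 1 / 2)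
    (hθ : |θ| ≤ 1) :
    ‖(1 - w * exp (θ * I))⁻¹ * (1 + w * exp (θ * I))⁻¹‖ ≤
      (1 - w)⁻¹ * (1 + w)⁻¹ * Real.exp (-((2 * θ) ^ 2 * w ^ 2 / (1 - w ^ 2) ^ 2) / 64) := by
  have hpair : (1 - w * exp (θ * I))⁻¹ * (1 + w * exp (θ * I))⁻¹ =
      (1 - ((w ^ 2 : ℝ) : ℂ) * exp (((2 * θ : ℝ) : ℂ) * I))⁻¹ := by
    rw [← mul_inv]
    congr 1
    push_cast
    rw [show 2 * (θ : ℂ) * I = θ * I + θ * I by ring, Complex.exp_add]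
    ring
  rw [hpair, ← mul_inv, show (1 - w) * (1 + w) = 1 - w ^ 2 by ring]
  refine norm_inv_one_sub_mul_exp_le (by positivity) (by nlinarith) ?_ ?_
  · rw [abs_mul, abs_two]
    linarith
  · rw [div_le_iff₀ (by nlinarith)]
    nlinarith [sq_abs θ, abs_nonneg θ]

lemma rpow_neg_sq_le_half {a α : ℝ} (ha : 2 ≤ a) (hα : 1 / 2 ≤ α) : (a ^ (-α)) ^ 2 ≤ 1 / 2 := by
  have h : (a ^ (-α)) ^ 2 ≤ a ^ (-1 : ℝ) := by
    rw [← rpow_natCast, ← rpow_mul (by positivity)]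
    exact rpow_le_rpow_of_exponent_le (by linarith) (by push_cast; linarith)
  rw [rpow_neg_one] at h
  exact h.trans (inv_le_of_inv_le₀ (by norm_num) (by norm_num; exact ha))

open Complex in
lemma norm_eulerFactor_le {p : ℕ} (hp : p.Prime) {α t : ℝ} (hα : 1 / 2 ≤ α)
    (ht : |t * Real.log p| ≤ 1) :
    ‖(1 - (p : ℂ) ^ (-(α + t * I)))⁻¹ * (1 - (chi4 p : ℂ) * (p : ℂ) ^ (-(α + t * I)))⁻¹‖ ≤
      (1 - (p : ℝ) ^ (-α))⁻¹ * (1 - chi4 p * (p : ℝ) ^ (-α))⁻¹ *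
        Real.exp (-(t ^ 2 *
          (logEulerFactorDeriv2 1 p α + logEulerFactorDeriv2 (chi4 p) p α)) / 64) := by
  have hp1 : (1 : ℝ) < p := by exact_mod_cast hp.one_lt
  rw [natCast_cpow_neg_add_mul_I hp.pos]
  set w := (p : ℝ) ^ (-α) with hw
  set θ := -(t * Real.log p)
  have hw0 : 0 ≤ w := (rpow_pos_of_pos (zero_lt_one.trans hp1) _).le
  have hw2 : w ^ 2 ≤ 1 / 2 := rpow_neg_sq_le_half (by exact_mod_cast hp.two_le) hα
  have hθ : |θ| ≤ 1 := by rwa [abs_neg]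
  have hq : t ^ 2 * logEulerFactorDeriv2 1 p α = θ ^ 2 * w / (1 - w) ^ 2 := by
    rw [sq_mul_logEulerFactorDeriv2_one, ← hw, neg_sq]
  have hone := norm_inv_one_sub_mul_exp_le_of_sq_le_half hw0 hw2 hθ
  rcases chi4_eq_zero_or_one_or_neg_one p with hc | hc | hc <;> rw [hc]
  · rw [show logEulerFactorDeriv2 0 p α = 0 by simp [logEulerFactorDeriv2], add_zero, hq]
    simpa using hone
  · rw [mul_add, neg_add, add_div, Real.exp_add, hq, ofReal_one, one_mul, one_mul, norm_mul,
      mul_mul_mul_comm]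
    have hw1 : w < 1 := by nlinarith
    exact mul_le_mul hone hone (norm_nonneg _)
      (mul_pos (inv_pos.2 (by linarith)) (Real.exp_pos _)).le
  · rw [logEulerFactorDeriv2_one_add_neg_one hp1 (by linarith), ← hw,
      show t ^ 2 * ((2 * Real.log p) ^ 2 * w ^ 2 / (1 - w ^ 2) ^ 2) =
        (2 * θ) ^ 2 * w ^ 2 / (1 - w ^ 2) ^ 2 by ring]
    simpa only [ofReal_neg, ofReal_one, neg_one_mul, sub_neg_eq_add] using
      norm_inv_one_sub_mul_exp_mul_inv_one_add_le hw2 hθ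

lemma HG_pos (y : ℝ) {σ : ℝ} (hσ : 0 < σ) : 0 < HG σ y := by
  refine prod_pos fun p hp => ?_
  have hp1 : (1 : ℝ) < p := by exact_mod_cast (mem_primesUpTo hp).1.one_lt
  have h1 := one_sub_mul_rpow_neg_pos hp1 (c := 1) (by norm_num) hσ
  have hχ := one_sub_mul_rpow_neg_pos hp1 (abs_chi4_le_one p) hσ
  rw [one_mul] at h1
  positivity

lemma HGc_ofReal (σ y : ℝ) : HGc σ y = HG σ y := by
  rw [HGc, HG, Complex.ofReal_prod]
  refine prod_congr rfl fun p _ => ?_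
  rw [← Complex.ofReal_natCast, ← Complex.ofReal_neg, ← Complex.ofReal_cpow (Nat.cast_nonneg p)]
  push_cast
  rfl

lemma norm_HGc_le {α t y : ℝ} (hα : 1 / 2 ≤ α) (ht : |t| ≤ 1 / Real.log y) :
    ‖HGc (α + t * Complex.I) y‖ ≤ HG α y * Real.exp (-(t ^ 2 * phiGk 2 α y) / 64) := by
  rw [phiGk_two_eq y (by linarith), mul_sum, ← sum_neg_distrib, sum_div, Real.exp_sum, HGc, HG,
    ← prod_mul_distrib, norm_prod]
  refine prod_le_prod (fun _ _ => norm_nonneg _) fun p hp => ?_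
  obtain ⟨hpp, hpy⟩ := mem_primesUpTo hp
  refine norm_eulerFactor_le hpp hα ?_
  have hlogp : 0 < Real.log p := Real.log_pos (by exact_mod_cast hpp.one_lt)
  have hlogy : Real.log p ≤ Real.log y := Real.log_le_log (by exact_mod_cast hpp.pos) hpy
  rw [abs_mul, abs_of_pos hlogp]
  calc |t| * Real.log p ≤ 1 / Real.log y * Real.log y :=
        mul_le_mul ht hlogy hlogp.le ((abs_nonneg t).trans ht)
    _ = 1 := one_div_mul_cancel (by linarith)

lemma norm_HGc_div_le {α t y : ℝ} (hα : 1 / 2 ≤ α) (ht : |t| ≤ 1 / Real.log y) :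
    ‖HGc (α + t * Complex.I) y / HGc α y‖ ≤ Real.exp (-(t ^ 2 * phiGk 2 α y) / 64) := by
  have hH := HG_pos y (by linarith : 0 < α)
  rw [norm_div, HGc_ofReal, Complex.norm_of_nonneg hH.le, div_le_iff₀ hH]
  linarith [norm_HGc_le hα ht]

lemma exp_neg_mul_le_exp_neg_mul_log_one_add {a c Y : ℝ} (ha : 0 ≤ a) (hc : 0 ≤ c) (hY : 0 < Y) :
    Real.exp (-(c * a)) ≤ Real.exp (-(c * Y) * Real.log (1 + a / Y)) := by
  have hlog : Y * Real.log (1 + a / Y) ≤ a := by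
    have := Real.log_le_sub_one_of_pos (show 0 < 1 + a / Y by positivity)
    calc Y * Real.log (1 + a / Y) ≤ Y * (a / Y) := by gcongr; linarith
      _ = a := mul_div_cancel₀ a hY.ne'
  rw [Real.exp_le_exp]
  nlinarith

/-- bound for `|H(s,G;y)/H(α_G,G;y)|` for small `t`. -/
theorem stmt17 (ε₁ : ℝ) (hε₁ : 0 < ε₁) :
    ∃ c₀ > (0:ℝ), ∃ y₀ : ℝ, ∀ x y : ℝ, 2 ≤ Real.log x → Real.log x ≤ y → y ≤ x → y₀ ≤ y →
      ∀ α : ℝ, 0 < α → Real.log x + phiGk 1 α y = 0 →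
        1 / 2 + ε₁ ≤ α → α ≤ 1 - 4 / Real.log y →
        ∀ t : ℝ, |t| ≤ 1 / Real.log y →
          ‖HGc (α + t * Complex.I) y / HGc (α : ℂ) y‖ ≤
            Real.exp (-(c₀ * y / Real.log y) *
              Real.log (1 + t ^ 2 * phiGk 2 α y / (y / Real.log y))) := by
  refine ⟨1 / 64, by norm_num, 2, fun x y _ _ _ hy α _ _ hαl _ t ht => ?_⟩
  have hα : 1 / 2 ≤ α := by linarith
  have hY : 0 < y / Real.log y := div_pos (by linarith) (Real.log_pos (by linarith))
  have hφ : 0 ≤ t ^ 2 * phiGk 2 α y := mul_nonneg (sq_nonneg t) (phiGk_two_nonneg y (by linarith))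
  calc _ ≤ Real.exp (-(t ^ 2 * phiGk 2 α y) / 64) := norm_HGc_div_le hα ht
    _ = Real.exp (-(1 / 64 * (t ^ 2 * phiGk 2 α y))) := by ring_nf
    _ ≤ _ := by
      convert exp_neg_mul_le_exp_neg_mul_log_one_add hφ (c := 1 / 64) (by norm_num) hY using 3
      ring
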